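/- arXiv:2003.05264 — 10 statements merged into one kernel-verified Lean document; each statement's English description precedes it below -/
import Mathlib

section
/- If an n×n communication matrix C has a quantum implementation C_{ab} = tr(ρ_a M(b)) with density matrices ρ_a and POVM M on ℂ^d, tr(C) = d, and every column of C is nonzero, then every M(b) has rank 1. -/
open Matrix BigOperators
open scoped ComplexOrder

/-- A quantum (dimension-d) implementation of a communication matrix `C`:
states `ρ` are density matrices, `M` is a POVM, and `C a b = tr(ρ_a M(b))`. -/
def QImpl {d n m : ℕ} (C : Matrix (Fin n) (Fin m) ℝ)
    (ρ : Fin n → Matrix (Fin d) (Fin d) ℂ) (M : Fin m → Matrix (Fin d) (Fin d) ℂ) : Prop :=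
  (∀ a, (ρ a).PosSemidef) ∧ (∀ a, (ρ a).trace = 1) ∧
  (∀ b, (M b).PosSemidef) ∧ (∑ b, M b) = 1 ∧
  ∀ a b, (C a b : ℂ) = (ρ a * M b).trace

/-!
Since `ρ a ≤ 1`, `tr (ρ a M a) ≤ tr (M a)`, and summing over `a` gives `tr C ≤ tr (∑ M a) = d`.
Equality forces `tr ((1 - ρ a) M a) = 0`, hence `ρ a M a = M a`: the range of `M a` lies in the
eigenspace of `ρ a` for the eigenvalue `1`, which is at most one-dimensional because the
eigenvalues of `ρ a` are nonnegative and sum to `1`. A nonzero column makes `M a ≠ 0`.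
-/

namespace Matrix

lemma eq_zero_of_rank_eq_zero {R m n : Type*} [Field R] [Fintype m] [DecidableEq m]
    {A : Matrix n m R} (h : A.rank = 0) : A = 0 := by
  rw [rank, Submodule.finrank_eq_zero, LinearMap.range_eq_bot] at h
  exact toLin'.injective (by rwa [map_zero, toLin'_apply'])

lemma rank_le_one_of_diagonal_mul_eq_self {R m n : Type*} [Field R] [Fintype m] [Fintype n]
    [DecidableEq n] {μ : n → R} (hμ : {i | μ i = 1}.Subsingleton) {N : Matrix n m R}
    (h : diagonal μ * N = N) : N.rank ≤ 1 := by
  classical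
  let e : n → R := fun i => if μ i = 1 then 1 else 0
  have hN : diagonal e * N = N := by
    ext i j
    have hij : μ i * N i j = N i j := by simpa using congrFun (congrFun h i) j
    by_cases hi : μ i = 1
    · simp [e, hi]
    · have : N i j = 0 := by
        by_contra hne
        exact hi (mul_left_cancel₀ hne (by rw [mul_comm, hij, mul_one]))
      simp [e, hi, this]
  calc N.rank = (diagonal e * N).rank := by rw [hN]
    _ ≤ (diagonal e).rank := rank_mul_le_left _ _
    _ = Fintype.card {i // e i ≠ 0} := rank_diagonal e
    _ ≤ 1 := Fintype.card_le_one_iff_subsingleton.mpr ⟨fun i j => Subtype.ext <|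
        hμ (by simpa [e] using i.2) (by simpa [e] using j.2)⟩

variable {𝕜 n : Type*} [RCLike 𝕜] [Fintype n]

lemma PosSemidef.trace_mul_nonneg {A B : Matrix n n 𝕜} (hA : A.PosSemidef) (hB : B.PosSemidef) :
    0 ≤ (A * B).trace := by
  classical
  open scoped MatrixOrder in
  obtain ⟨X, rfl⟩ := CStarAlgebra.nonneg_iff_eq_star_mul_self.mp hA.nonneg
  rw [mul_assoc, trace_mul_comm, star_eq_conjTranspose]
  exact (hB.mul_mul_conjTranspose_same X).trace_nonneg

lemma PosSemidef.mul_eq_zero_of_trace_mul_eq_zero {A B : Matrix n n 𝕜}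
    (hA : A.PosSemidef) (hB : B.PosSemidef) (h : (A * B).trace = 0) : A * B = 0 := by
  classical
  -- With `A = Xᴴ X`, `B = Yᴴ Y` and `Z = Y Xᴴ`: `tr (A B) = tr (Zᴴ Z)` and `A B = Xᴴ Zᴴ Y`.
  open scoped MatrixOrder in
  obtain ⟨X, rfl⟩ := CStarAlgebra.nonneg_iff_eq_star_mul_self.mp hA.nonneg
  open scoped MatrixOrder in
  obtain ⟨Y, rfl⟩ := CStarAlgebra.nonneg_iff_eq_star_mul_self.mp hB.nonneg
  simp only [star_eq_conjTranspose] at h ⊢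
  have htrace : (Xᴴ * X * (Yᴴ * Y)).trace = ((Y * Xᴴ)ᴴ * (Y * Xᴴ)).trace := by
    simp only [conjTranspose_mul, conjTranspose_conjTranspose, mul_assoc]
    rw [← trace_mul_comm]
    simp only [mul_assoc]
  have hZ : Y * Xᴴ = 0 := trace_conjTranspose_mul_self_eq_zero_iff.mp (htrace ▸ h)
  calc Xᴴ * X * (Yᴴ * Y) = Xᴴ * (Y * Xᴴ)ᴴ * Y := by
        simp only [conjTranspose_mul, conjTranspose_conjTranspose, mul_assoc]
    _ = 0 := by rw [hZ, conjTranspose_zero, mul_zero, zero_mul]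

lemma IsHermitian.sum_eigenvalues_eq_one [DecidableEq n] {ρ : Matrix n n 𝕜} (hρ : ρ.IsHermitian)
    (htr : ρ.trace = 1) : ∑ i, hρ.eigenvalues i = 1 := by
  have := hρ.trace_eq_sum_eigenvalues
  rw [htr] at this
  exact_mod_cast this.symm

lemma PosSemidef.posSemidef_one_sub [DecidableEq n] {ρ : Matrix n n 𝕜} (hρ : ρ.PosSemidef)
    (htr : ρ.trace = 1) : (1 - ρ).PosSemidef := by
  have hle : ∀ i, hρ.1.eigenvalues i ≤ 1 := fun i =>
    hρ.1.sum_eigenvalues_eq_one htr ▸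
      Finset.single_le_sum (fun j _ => hρ.eigenvalues_nonneg j) (Finset.mem_univ i)
  rw [hρ.1.spectral_theorem, ← map_one (Unitary.conjStarAlgAut 𝕜 _ hρ.1.eigenvectorUnitary),
    ← map_sub, Unitary.conjStarAlgAut_apply, star_eq_conjTranspose]
  refine PosSemidef.mul_mul_conjTranspose_same ?_ _
  rw [← diagonal_one, diagonal_sub, posSemidef_diagonal_iff]
  intro i
  have : (0 : 𝕜) ≤ ((1 - hρ.1.eigenvalues i : ℝ) : 𝕜) :=
    RCLike.ofReal_nonneg.mpr (by linarith [hle i])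
  simpa using this

lemma PosSemidef.rank_le_one_of_mul_eq_self [DecidableEq n]
    {ρ : Matrix n n 𝕜} (hρ : ρ.PosSemidef) (htr : ρ.trace = 1) {M : Matrix n n 𝕜}
    (hM : ρ * M = M) : M.rank ≤ 1 := by
  set U : Matrix n n 𝕜 := (hρ.1.eigenvectorUnitary : Matrix n n 𝕜)
  have hUU : star U * U = 1 := Unitary.coe_star_mul_self _
  have hconj : star U * ρ = diagonal (RCLike.ofReal ∘ hρ.1.eigenvalues) * star U := by
    conv_lhs => rw [hρ.1.spectral_theorem, Unitary.conjStarAlgAut_apply]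
    rw [← mul_assoc, ← mul_assoc, hUU, one_mul]
  have hdiag : diagonal (RCLike.ofReal ∘ hρ.1.eigenvalues) * (star U * M) = star U * M := by
    rw [← mul_assoc, ← hconj, mul_assoc, hM]
  rw [← rank_mul_eq_right_of_isUnit_det (star U) M (isUnit_det_of_right_inverse hUU)]
  refine rank_le_one_of_diagonal_mul_eq_self (fun i hi j hj => ?_) hdiag
  replace hi : hρ.1.eigenvalues i = 1 := by simpa using hi
  replace hj : hρ.1.eigenvalues j = 1 := by simpa using hj
  by_contra hij
  have := Finset.add_le_sum (fun k _ => hρ.eigenvalues_nonneg k) (Finset.mem_univ i)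
    (Finset.mem_univ j) hij
  rw [hi, hj, hρ.1.sum_eigenvalues_eq_one htr] at this
  norm_num at this

end Matrix

namespace QImpl

variable {d n : ℕ} {ρ : Fin n → Matrix (Fin d) (Fin d) ℂ}

lemma povm_ne_zero {m : ℕ} {C : Matrix (Fin n) (Fin m) ℝ} {M : Fin m → Matrix (Fin d) (Fin d) ℂ}
    (h : QImpl C ρ M) {a : Fin n} {b : Fin m} (hab : C a b ≠ 0) : M b ≠ 0 := by
  rintro hMb
  have : (C a b : ℂ) = 0 := by rw [h.2.2.2.2 a b, hMb, mul_zero, trace_zero]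
  exact hab (by exact_mod_cast this)

lemma density_mul_povm_eq_self {C : Matrix (Fin n) (Fin n) ℝ}
    {M : Fin n → Matrix (Fin d) (Fin d) ℂ} (h : QImpl C ρ M) (htr : C.trace = d) (a : Fin n) :
    ρ a * M a = M a := by
  -- Each `tr ((1 - ρ a) M a)` is nonnegative, and they sum to `tr (∑ M a) - tr C = d - d = 0`.
  obtain ⟨hρ, hρtr, hM, hMsum, hC⟩ := h
  have hnonneg : ∀ a ∈ Finset.univ, 0 ≤ ((1 - ρ a) * M a).trace := fun a _ =>
    ((hρ a).posSemidef_one_sub (hρtr a)).trace_mul_nonneg (hM a)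
  have hsum : ∑ a, ((1 - ρ a) * M a).trace = 0 := by
    have hdiag : ∑ a, (ρ a * M a).trace = d := by
      simp only [← hC]
      exact_mod_cast htr
    simp only [sub_mul, one_mul, trace_sub, Finset.sum_sub_distrib, ← trace_sum, hMsum,
      trace_one, Fintype.card_fin, hdiag, sub_self]
  have hzero := (Finset.sum_eq_zero_iff_of_nonneg hnonneg).mp hsum a (Finset.mem_univ a)
  have := ((hρ a).posSemidef_one_sub (hρtr a)).mul_eq_zero_of_trace_mul_eq_zero (hM a) hzero
  rwa [sub_mul, one_mul, sub_eq_zero, eq_comm] at this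

end QImpl

/-- If tr(C) = d for a quantum implementation in dimension d and every column of C
is nonzero, then every POVM element has rank one. -/
theorem povm_rank_one_of_trace_eq {d n : ℕ} (C : Matrix (Fin n) (Fin n) ℝ)
    (ρ : Fin n → Matrix (Fin d) (Fin d) ℂ) (M : Fin n → Matrix (Fin d) (Fin d) ℂ)
    (h : QImpl C ρ M) (htr : C.trace = (d : ℝ))
    (hcol : ∀ b, ∃ a, C a b ≠ 0) :
    ∀ b, (M b).rank = 1 := by
  intro b
  obtain ⟨a, hab⟩ := hcol b
  have hle : (M b).rank ≤ 1 :=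
    (h.1 b).rank_le_one_of_mul_eq_self (h.2.1 b) (h.density_mul_povm_eq_self htr b)
  have hne : (M b).rank ≠ 0 := fun h0 => h.povm_ne_zero hab (Matrix.eq_zero_of_rank_eq_zero h0)
  omega
end

section
/- The matrix D = (1/4)[[2,0,1,1],[0,2,1,1],[1,1,2,0],[1,1,0,2]] has a qubit implementation: there exist density matrices ρ_1,…,ρ_4 on ℂ² and a 4-outcome POVM M on ℂ² with D_{ij} = tr(ρ_i M(j)). -/
open Matrix BigOperators
open scoped ComplexOrder

/-!
Take `ρ_i = v_i v_iᴴ / 2` and `M(j) = v_j v_jᴴ / 4` for the four vectors `v = (1, ±1), (1, ±i)`.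
For rank-one operators `tr (u uᴴ * v vᴴ) = |⟨u, v⟩|²`. The two pairs are orthogonal bases of `ℂ²`
that are mutually unbiased, so `|⟨v_i, v_j⟩|²` is `4`, `0` or `2` exactly as `8 D_ij` prescribes,
and each basis contributes `2 I` to `∑ v_j v_jᴴ = 4 I`.
-/

theorem trace_vecMulVec_star_mul_vecMulVec_star {n : Type*} [Fintype n] (u v : n → ℂ) :
    (vecMulVec u (star u) * vecMulVec v (star v)).trace = Complex.normSq (star u ⬝ᵥ v) := by
  rw [vecMulVec_mul_vecMulVec, trace_vecMulVec, dotProduct_smul, smul_eq_mul, dotProduct_comm u,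
    star_dotProduct v u, ← Complex.mul_conj]
  rfl

theorem qImpl_of_rankOne {d n m : ℕ} (C : Matrix (Fin n) (Fin m) ℝ) (u : Fin n → Fin d → ℂ)
    (v : Fin m → Fin d → ℂ) (r : Fin n → ℝ) (s : Fin m → ℝ) (hr : 0 ≤ r) (hs : 0 ≤ s)
    (hu : ∀ a, (r a : ℂ) * (star (u a) ⬝ᵥ u a) = 1)
    (hv : ∑ b, s b • vecMulVec (v b) (star (v b)) = 1)
    (hC : ∀ a b, C a b = r a * s b * Complex.normSq (star (u a) ⬝ᵥ v b)) :
    QImpl C (fun a => r a • vecMulVec (u a) (star (u a)))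
      (fun b => s b • vecMulVec (v b) (star (v b))) := by
  refine ⟨fun a => (posSemidef_vecMulVec_self_star _).smul (hr a), fun a => ?_,
    fun b => (posSemidef_vecMulVec_self_star _).smul (hs b), hv, fun a b => ?_⟩
  · rw [trace_smul, trace_vecMulVec, dotProduct_comm, ← hu a, Complex.real_smul]
  · rw [smul_mul_smul_comm, trace_smul, trace_vecMulVec_star_mul_vecMulVec_star, hC]
    simp [Complex.real_smul, mul_assoc]

/-- Unnormalised eigenvectors of `σ_x` and `σ_y` for the eigenvalues `±1`, so that
`vecMulVec v (star v) = I ± σ`. -/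
def pauliXYEigenvector : Fin 4 → Fin 2 → ℂ :=
  ![![1, 1], ![1, -1], ![1, Complex.I], ![1, -Complex.I]]

theorem star_pauliXYEigenvector_dotProduct_self (a : Fin 4) :
    star (pauliXYEigenvector a) ⬝ᵥ pauliXYEigenvector a = 2 := by
  fin_cases a <;> simp [pauliXYEigenvector, dotProduct, Fin.sum_univ_two] <;> norm_num

theorem normSq_star_pauliXYEigenvector_dotProduct (a b : Fin 4) :
    Complex.normSq (star (pauliXYEigenvector a) ⬝ᵥ pauliXYEigenvector b) =
      2 * !![2, 0, 1, 1; 0, 2, 1, 1; 1, 1, 2, 0; 1, 1, 0, 2] a b := by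
  fin_cases a <;> fin_cases b <;>
    simp [pauliXYEigenvector, dotProduct, Fin.sum_univ_two, Complex.normSq_apply] <;> norm_num

theorem sum_vecMulVec_pauliXYEigenvector :
    ∑ b, vecMulVec (pauliXYEigenvector b) (star (pauliXYEigenvector b)) = (4 : ℝ) • 1 := by
  ext i j
  fin_cases i <;> fin_cases j <;>
    simp [pauliXYEigenvector, Fin.sum_univ_four, vecMulVec_apply, -cons_vecMulVec,
      -vecMulVec_cons] <;> norm_num

/-- The matrix D = (1/4)[[2,0,1,1],[0,2,1,1],[1,1,2,0],[1,1,0,2]] has a qubit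
implementation. -/
theorem qubit_implementation_exists :
    ∃ (ρ : Fin 4 → Matrix (Fin 2) (Fin 2) ℂ) (M : Fin 4 → Matrix (Fin 2) (Fin 2) ℂ),
      QImpl ((1/4 : ℝ) • !![2, 0, 1, 1; 0, 2, 1, 1; 1, 1, 2, 0; 1, 1, 0, 2]) ρ M := by
  refine ⟨_, _, qImpl_of_rankOne _ pauliXYEigenvector pauliXYEigenvector (fun _ => 1 / 2)
    (fun _ => 1 / 4) (fun _ => by norm_num) (fun _ => by norm_num) (fun a => ?_) ?_
    (fun a b => ?_)⟩
  · rw [star_pauliXYEigenvector_dotProduct_self]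
    norm_num
  · rw [← Finset.smul_sum, sum_vecMulVec_pauliXYEigenvector, smul_smul]
    norm_num
  · rw [normSq_star_pauliXYEigenvector_dotProduct, Matrix.smul_apply, smul_eq_mul]
    ring
end

section
/- If a 3×3 communication matrix D is implementable with a qubit and has all diagonal entries equal to 2/3, then D = D_{3,1/3}, the matrix with 2/3 on the diagonal and 1/6 off the diagonal. -/
open Matrix BigOperators
open scoped ComplexOrder

noncomputable def Dmat (n : ℕ) (ε : ℝ) : Matrix (Fin n) (Fin n) ℝ :=
  Matrix.of fun i j => if i = j then 1 - ε else ε / (n - 1)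

open scoped InnerProductSpace

/-!
A Hermitian qubit operator is `A = (tr A / 2) • 1 + v • σ` with Pauli vector `v = blochVec A`,
so `tr (A B) = tr A tr B / 2 + 2 ⟪v_A, v_B⟫`, and `A ≥ 0` gives `‖v_A‖ ≤ tr A / 2` (this is
`det A ≥ 0`). Hence `D a b = α b + ⟪r a, m b⟫` for `r a = 2 v_{ρ a}`, `m b = v_{M b}`,
`α b = tr (M b) / 2`, with `‖r a‖ ≤ 1`, `‖m b‖ ≤ α b`, `∑ α = 1` and
`∑ m = 0`. Since `2/3 = α a + ⟪r a, m a⟫ ≤ 2 α a`, every `α a = 1/3`, and equality in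
Cauchy–Schwarz gives `m a = r a / 3` with `‖m a‖ = 1/3`. Three vectors of length `1/3` summing to
zero have pairwise inner products `-1/18`, so `D a b = 1/3 - 3/18 = 1/6` for `a ≠ b`.
-/

section InnerProductSpace

variable {E : Type*} [NormedAddCommGroup E] [InnerProductSpace ℝ E]

lemma eq_smul_of_le_inner {r m : E} {c : ℝ} (hr : ‖r‖ ≤ 1) (hm : ‖m‖ ≤ c) (h : c ≤ ⟪r, m⟫_ℝ) :
    m = c • r := by
  have hc : 0 ≤ c := (norm_nonneg m).trans hm
  have hm2 : ‖m‖ ^ 2 ≤ c ^ 2 := pow_le_pow_left₀ (norm_nonneg m) hm 2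
  have hr2 : (c * ‖r‖) ^ 2 ≤ c ^ 2 :=
    pow_le_pow_left₀ (by positivity) (mul_le_of_le_one_right hc hr) 2
  have : ‖m - c • r‖ ^ 2 ≤ 0 := by
    rw [norm_sub_sq_real, norm_smul, real_inner_smul_right, real_inner_comm,
      Real.norm_of_nonneg hc]
    nlinarith [mul_le_mul_of_nonneg_left h hc]
  exact sub_eq_zero.mp (norm_le_zero_iff.mp (pow_eq_zero_iff two_ne_zero |>.mp
    (le_antisymm this (sq_nonneg _))).le)

lemma inner_eq_neg_sq_div_two_of_sum_eq_zero {m : Fin 3 → E} (hsum : ∑ i, m i = 0) {c : ℝ}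
    (hm : ∀ i, ‖m i‖ = c) {a b : Fin 3} (hab : a ≠ b) : ⟪m a, m b⟫_ℝ = -c ^ 2 / 2 := by
  have h (i : Fin 3) : ⟪m i, ∑ j, m j⟫_ℝ = 0 := by rw [hsum, inner_zero_right]
  have h0 := h 0
  have h1 := h 1
  have h2 := h 2
  simp only [Fin.sum_univ_three, inner_add_right, real_inner_self_eq_norm_sq, hm] at h0 h1 h2
  fin_cases a <;> fin_cases b <;>
    simp only [Fin.zero_eta, Fin.mk_one, Fin.reduceFinMk, ne_eq, not_true_eq_false] at hab ⊢ <;>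
    linarith [real_inner_comm (m 0) (m 1), real_inner_comm (m 0) (m 2),
      real_inner_comm (m 1) (m 2)]

lemma off_diag_eq_of_diag_eq_two_thirds {r m : Fin 3 → E} {α : Fin 3 → ℝ}
    (hr : ∀ a, ‖r a‖ ≤ 1) (hm : ∀ b, ‖m b‖ ≤ α b) (hα : ∑ b, α b = 1) (hmsum : ∑ b, m b = 0)
    (hdiag : ∀ a, α a + ⟪r a, m a⟫_ℝ = 2 / 3) {a b : Fin 3} (hab : a ≠ b) :
    α b + ⟪r a, m b⟫_ℝ = 1 / 6 := by
  have hα_ge (a : Fin 3) : 1 / 3 ≤ α a := by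
    nlinarith [real_inner_le_norm (r a) (m a), hr a, hm a, hdiag a, norm_nonneg (m a)]
  have hα_eq (a : Fin 3) : α a = 1 / 3 := by
    rw [Fin.sum_univ_three] at hα
    fin_cases a <;> dsimp <;> linarith [hα_ge 0, hα_ge 1, hα_ge 2]
  have hm_le (a : Fin 3) : ‖m a‖ ≤ 1 / 3 := hα_eq a ▸ hm a
  have hm_eq (a : Fin 3) : m a = (1 / 3 : ℝ) • r a :=
    eq_smul_of_le_inner (hr a) (hm_le a) (by linarith [hdiag a, hα_eq a])
  have hm_norm (a : Fin 3) : ‖m a‖ = 1 / 3 := le_antisymm (hm_le a) <| by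
    nlinarith [real_inner_le_norm (r a) (m a), hr a, norm_nonneg (m a), hdiag a, hα_eq a]
  have hinner := inner_eq_neg_sq_div_two_of_sum_eq_zero hmsum hm_norm hab
  rw [hm_eq a, real_inner_smul_left] at hinner
  linarith [hα_eq b]

end InnerProductSpace

noncomputable def blochVec : Matrix (Fin 2) (Fin 2) ℂ →+ EuclideanSpace ℝ (Fin 3) :=
  AddMonoidHom.mk' (fun A => !₂[(A 0 1).re, -(A 0 1).im, ((A 0 0).re - (A 1 1).re) / 2])
    (fun A B => by ext i; fin_cases i <;> simp [add_sub_add_comm, add_div, add_comm])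

lemma blochVec_one : blochVec 1 = 0 := by
  ext i; fin_cases i <;> simp [blochVec]

lemma inner_blochVec (A B : Matrix (Fin 2) (Fin 2) ℂ) :
    ⟪blochVec A, blochVec B⟫_ℝ = (A 0 1).re * (B 0 1).re + (A 0 1).im * (B 0 1).im +
      ((A 0 0).re - (A 1 1).re) * ((B 0 0).re - (B 1 1).re) / 4 := by
  simp only [blochVec, AddMonoidHom.mk'_apply, PiLp.inner_apply, RCLike.inner_apply,
    Fin.sum_univ_three, cons_val_zero, cons_val_one, cons_val, conj_trivial]
  ring

lemma Matrix.IsHermitian.re_trace_mul_eq {A B : Matrix (Fin 2) (Fin 2) ℂ} (hA : A.IsHermitian)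
    (hB : B.IsHermitian) :
    (A * B).trace.re = A.trace.re * B.trace.re / 2 + 2 * ⟪blochVec A, blochVec B⟫_ℝ := by
  have hA00 := Complex.conj_eq_iff_im.mp (hA.apply 0 0)
  have hA11 := Complex.conj_eq_iff_im.mp (hA.apply 1 1)
  have hB00 := Complex.conj_eq_iff_im.mp (hB.apply 0 0)
  have hB11 := Complex.conj_eq_iff_im.mp (hB.apply 1 1)
  simp only [inner_blochVec, trace_fin_two, mul_apply, Fin.sum_univ_two, ← hA.apply 1 0,
    ← hB.apply 1 0, RCLike.star_def, Complex.add_re, Complex.mul_re, Complex.conj_re,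
    Complex.conj_im, hA00, hA11, hB00, hB11]
  ring

lemma Matrix.PosSemidef.norm_blochVec_le {A : Matrix (Fin 2) (Fin 2) ℂ} (hA : A.PosSemidef) :
    ‖blochVec A‖ ≤ A.trace.re / 2 := by
  have hdet := (Complex.nonneg_iff.mp hA.det_nonneg).1
  have htr := (Complex.nonneg_iff.mp hA.trace_nonneg).1
  have hA00 := Complex.conj_eq_iff_im.mp (hA.1.apply 0 0)
  have hA11 := Complex.conj_eq_iff_im.mp (hA.1.apply 1 1)
  simp only [det_fin_two, ← hA.1.apply 1 0, RCLike.star_def, Complex.sub_re, Complex.mul_re,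
    Complex.conj_re, Complex.conj_im, hA00, hA11] at hdet
  simp only [trace_fin_two, Complex.add_re] at htr ⊢
  rw [← sq_le_sq₀ (norm_nonneg _) (by linarith), ← real_inner_self_eq_norm_sq, inner_blochVec]
  nlinarith

lemma QImpl.apply_eq_add_inner {n m : ℕ} {D : Matrix (Fin n) (Fin m) ℝ}
    {ρ : Fin n → Matrix (Fin 2) (Fin 2) ℂ} {M : Fin m → Matrix (Fin 2) (Fin 2) ℂ}
    (h : QImpl D ρ M) (a : Fin n) (b : Fin m) :
    D a b = (M b).trace.re / 2 + ⟪(2 : ℝ) • blochVec (ρ a), blochVec (M b)⟫_ℝ := by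
  obtain ⟨hρ, hρtr, hM, -, hD⟩ := h
  have hDre := congrArg Complex.re (hD a b)
  rw [Complex.ofReal_re, (hρ a).1.re_trace_mul_eq (hM b).1, hρtr a, Complex.one_re] at hDre
  rw [hDre, real_inner_smul_left, one_mul]

/-- A qubit-implementable 3×3 communication matrix with all diagonal entries 2/3
must equal D_{3,1/3}. -/
theorem qubit_diag_two_thirds_unique (D : Matrix (Fin 3) (Fin 3) ℝ)
    (ρ : Fin 3 → Matrix (Fin 2) (Fin 2) ℂ) (M : Fin 3 → Matrix (Fin 2) (Fin 2) ℂ)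
    (h : QImpl D ρ M) (hdiag : ∀ a, D a a = 2/3) :
    D = Dmat 3 (1/3) := by
  have hD := h.apply_eq_add_inner
  obtain ⟨hρ, hρtr, hM, hMsum, -⟩ := h
  have hoff (a b : Fin 3) (hab : a ≠ b) : D a b = 1 / 6 := by
    rw [hD]
    refine off_diag_eq_of_diag_eq_two_thirds (fun a => ?_) (fun b => (hM b).norm_blochVec_le)
      ?_ ?_ (fun a => by rw [← hD, hdiag]) hab
    · have hρa := (hρ a).norm_blochVec_le
      rw [hρtr a, Complex.one_re] at hρa
      rw [norm_smul, Real.norm_two]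
      linarith
    · rw [← Finset.sum_div, ← Complex.re_sum, ← trace_sum, hMsum]
      simp
    · rw [← map_sum, hMsum, blochVec_one]
  ext a b
  rcases eq_or_ne a b with rfl | hab
  · norm_num [Dmat, hdiag]
  · norm_num [Dmat, hab, hoff a b hab]
end

section
/- The function λ_max(C) = Σ_j max_i C_{ij} is an ultraweak monotone: if C ⊑ D for row-stochastic matrices C, D, then λ_max(C) ≤ λ_max(D). -/
open Matrix BigOperators

def RowStochastic {a b : ℕ} (M : Matrix (Fin a) (Fin b) ℝ) : Prop :=
  (∀ i j, 0 ≤ M i j) ∧ ∀ i, ∑ j, M i j = 1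

def UW {a b c d : ℕ} (C : Matrix (Fin a) (Fin b) ℝ) (D : Matrix (Fin c) (Fin d) ℝ) : Prop :=
  ∃ (L : Matrix (Fin a) (Fin c) ℝ) (R : Matrix (Fin d) (Fin b) ℝ),
    RowStochastic L ∧ RowStochastic R ∧ C = L * D * R
/-- λ_max: sum over columns of the maximal entry of the column. -/
noncomputable def lmax {n m : ℕ} (C : Matrix (Fin n) (Fin m) ℝ) : ℝ :=
  ∑ j, ⨆ i, C i j

/-- λ_max is an ultraweak monotone. -/
theorem lmax_uw_monotone {a b c d : ℕ} (C : Matrix (Fin a) (Fin b) ℝ)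
    (D : Matrix (Fin c) (Fin d) ℝ) (hC : RowStochastic C) (hD : RowStochastic D)
    (h : UW C D) : lmax C ≤ lmax D := by
  obtain ⟨L, R, hL, hR, hCLR⟩ := h
  rcases Nat.eq_zero_or_pos a with ha | ha
  · subst ha
    have h1 : lmax C = 0 := by
      simp [lmax, iSup_of_empty, Real.sSup_empty]
    rw [h1]
    unfold lmax
    apply Finset.sum_nonneg
    intro j _
    rcases Nat.eq_zero_or_pos c with hc | hc
    · subst hc; simp [iSup_of_empty, Real.sSup_empty]
    · have : (0:ℝ) ≤ D ⟨0, hc⟩ j := hD.1 _ _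
      exact le_trans this (le_ciSup (f := fun i => D i j) (Set.Finite.bddAbove (Set.finite_range _)) _)
  · -- a > 0, so c > 0
    have hi0 : Nonempty (Fin a) := ⟨⟨0, ha⟩⟩
    have hc : 0 < c := by
      by_contra hc
      push_neg at hc
      interval_cases c
      have := hL.2 ⟨0, ha⟩
      simp at this
    have hk0 : Nonempty (Fin c) := ⟨⟨0, hc⟩⟩
    have key : ∀ j, (⨆ i, C i j) ≤ ∑ l, (⨆ k, D k l) * R l j := by
      intro j
      apply ciSup_le
      intro i
      have hCij : C i j = ∑ l, (∑ k, L i k * D k l) * R l j := by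
        rw [hCLR]
        simp [Matrix.mul_apply]
      rw [hCij]
      apply Finset.sum_le_sum
      intro l _
      apply mul_le_mul_of_nonneg_right _ (hR.1 l j)
      calc ∑ k, L i k * D k l ≤ ∑ k, L i k * (⨆ k', D k' l) := by
            apply Finset.sum_le_sum
            intro k _
            exact mul_le_mul_of_nonneg_left
              (le_ciSup (f := fun k => D k l) (Set.Finite.bddAbove (Set.finite_range _)) k) (hL.1 i k)
        _ = (∑ k, L i k) * (⨆ k', D k' l) := by rw [Finset.sum_mul]
        _ = ⨆ k', D k' l := by rw [hL.2 i, one_mul]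
    calc lmax C ≤ ∑ j, ∑ l, (⨆ k, D k l) * R l j :=
          Finset.sum_le_sum fun j _ => key j
      _ = ∑ l, (⨆ k, D k l) * ∑ j, R l j := by
          rw [Finset.sum_comm]
          simp [Finset.mul_sum]
      _ = lmax D := by simp [hR.2, lmax]
end

section
/- The positive semidefinite rank is an ultraweak monotone: if C ⊑ D for row-stochastic matrices, then rank_psd(C) ≤ rank_psd(D). -/
open Matrix BigOperators
open scoped ComplexOrder

/-- The positive semidefinite rank: the smallest k such that C_{ij} = tr(A_i B_j)
for k×k positive semidefinite matrices A_i, B_j. -/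
noncomputable def psdRank {n m : ℕ} (C : Matrix (Fin n) (Fin m) ℝ) : ℕ :=
  sInf {k : ℕ | ∃ (A : Fin n → Matrix (Fin k) (Fin k) ℂ) (B : Fin m → Matrix (Fin k) (Fin k) ℂ),
    (∀ i, (A i).PosSemidef) ∧ (∀ j, (B j).PosSemidef) ∧
    ∀ i j, (C i j : ℂ) = (A i * B j).trace}

/-!
If `D_pq = tr(A_p B_q)` with `A_p, B_q` positive semidefinite and `C = L D R` with `L, R`
entrywise nonnegative, then `C_ij = tr(A'_i B'_j)` for `A'_i = ∑_p L_ip A_p` and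
`B'_j = ∑_q R_qj B_q`, which are again positive semidefinite and of the same size. Since
`psdRank` is an `sInf` over `ℕ` (junk value `0` on the empty set), the factorization of `D` of
size `psdRank D` must exist: for nonnegative `D` the diagonal factorization
`D_pq = tr(diag(e_p) diag(D_·q))` makes the set nonempty.
-/

namespace Matrix

variable {m n o : Type*}

def HasPSDFactorization (C : Matrix m n ℝ) (k : ℕ) : Prop :=
  ∃ (A : m → Matrix (Fin k) (Fin k) ℂ) (B : n → Matrix (Fin k) (Fin k) ℂ),
    (∀ i, (A i).PosSemidef) ∧ (∀ j, (B j).PosSemidef) ∧ ∀ i j, (C i j : ℂ) = (A i * B j).trace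

theorem posSemidef_sum_smul_of_nonneg {l : Type*} [Fintype m] {w : m → ℝ} (hw : ∀ i, 0 ≤ w i)
    {A : m → Matrix l l ℂ} (hA : ∀ i, (A i).PosSemidef) :
    (∑ i, w i • A i).PosSemidef :=
  posSemidef_sum _ fun i _ => (hA i).smul (hw i)

theorem hasPSDFactorization_of_nonneg {r : ℕ} {C : Matrix (Fin r) n ℝ} (hC : ∀ i j, 0 ≤ C i j) :
    C.HasPSDFactorization r := by
  classical
  refine ⟨fun p => diagonal (Pi.single p 1), fun q => diagonal fun p => (C p q : ℂ),
    fun p => PosSemidef.diagonal (Pi.single_nonneg.mpr zero_le_one),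
    fun q => posSemidef_diagonal_iff.mpr fun p => by exact_mod_cast hC p q, fun p q => ?_⟩
  simp [diagonal_mul_diagonal, trace_diagonal, Pi.single_apply]

namespace HasPSDFactorization

variable {C : Matrix m n ℝ} {k : ℕ}

theorem nonneg_mul [Fintype m] (hC : C.HasPSDFactorization k) {L : Matrix o m ℝ}
    (hL : ∀ i j, 0 ≤ L i j) : (L * C).HasPSDFactorization k := by
  obtain ⟨A, B, hA, hB, hAB⟩ := hC
  refine ⟨fun i => ∑ p, L i p • A p, B, fun i => posSemidef_sum_smul_of_nonneg (hL i) hA, hB,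
    fun i j => ?_⟩
  simp only [mul_apply, Finset.sum_mul, smul_mul_assoc, trace_sum, trace_smul, ← hAB]
  push_cast
  simp [Complex.real_smul]

theorem mul_nonneg [Fintype n] (hC : C.HasPSDFactorization k) {R : Matrix n o ℝ}
    (hR : ∀ i j, 0 ≤ R i j) : (C * R).HasPSDFactorization k := by
  obtain ⟨A, B, hA, hB, hAB⟩ := hC
  refine ⟨A, fun j => ∑ q, R q j • B q, hA, fun j => posSemidef_sum_smul_of_nonneg (hR · j) hB,
    fun i j => ?_⟩
  simp only [mul_apply, Finset.mul_sum, mul_smul_comm, trace_sum, trace_smul, ← hAB]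
  push_cast
  simp [Complex.real_smul, mul_comm]

end HasPSDFactorization

end Matrix

theorem psdRank_le {n m k : ℕ} {C : Matrix (Fin n) (Fin m) ℝ} (hC : C.HasPSDFactorization k) :
    psdRank C ≤ k :=
  Nat.sInf_le hC

theorem hasPSDFactorization_psdRank {n m : ℕ} {C : Matrix (Fin n) (Fin m) ℝ}
    (hC : ∀ i j, 0 ≤ C i j) : C.HasPSDFactorization (psdRank C) :=
  Nat.sInf_mem (s := {k | C.HasPSDFactorization k}) ⟨n, Matrix.hasPSDFactorization_of_nonneg hC⟩

theorem psdRank_uw_monotone_general {a b c d : ℕ} (C : Matrix (Fin a) (Fin b) ℝ)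
    (D : Matrix (Fin c) (Fin d) ℝ) (hD : RowStochastic D)
    (h : UW C D) : psdRank C ≤ psdRank D := by
  obtain ⟨L, R, hL, hR, rfl⟩ := h
  exact psdRank_le (((hasPSDFactorization_psdRank hD.1).nonneg_mul hL.1).mul_nonneg hR.1)

/-- The positive semidefinite rank is an ultraweak monotone. -/
theorem psdRank_uw_monotone {a b c d : ℕ} (C : Matrix (Fin a) (Fin b) ℝ)
    (D : Matrix (Fin c) (Fin d) ℝ) (hC : RowStochastic C) (hD : RowStochastic D)
    (h : UW C D) : psdRank C ≤ psdRank D :=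
  psdRank_uw_monotone_general C D hD h
end

section
/- For a row-stochastic matrix C, ι(C) = k (i.e., the largest identity matrix ultraweakly majorized by C is I_k) if and only if the maximal number of pairwise orthogonal rows of C is k. -/
open Matrix BigOperators

/-- ι(C): the largest k with I_k ⊑ C. -/
noncomputable def iota {n m : ℕ} (C : Matrix (Fin n) (Fin m) ℝ) : ℕ :=
  sSup {k : ℕ | UW (1 : Matrix (Fin k) (Fin k) ℝ) C}

/-!
If `I_k = L C R`, the rows of `P = L C` are pairwise orthogonal: a column `j` in the support of
rows `s ≠ t` of `P` would make row `j` of `R` vanish, because every off-diagonal entry of `P R`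
is a sum of nonnegative terms. Row `s` of `P` dominates `L s i • C i`, so choosing `i` with
`L s i ≠ 0` in each row of `L` yields `k` pairwise orthogonal rows of `C`. Conversely, `k`
pairwise orthogonal rows of `C` are picked out by a `0/1` matrix `L`, and since their supports are
disjoint, the `0/1` matrix `R` sending each column to the selected row containing it in its support
gives `L C R = I_k`.
-/

theorem dotProduct_eq_zero_iff_of_nonneg {ι R : Type*} [Fintype ι] [Semiring R] [PartialOrder R]
    [IsOrderedRing R] {v w : ι → R} (hv : 0 ≤ v) (hw : 0 ≤ w) :
    v ⬝ᵥ w = 0 ↔ ∀ j, v j * w j = 0 := by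
  simpa [dotProduct] using
    Finset.sum_eq_zero_iff_of_nonneg (s := Finset.univ) fun j _ => mul_nonneg (hv j) (hw j)

theorem Finset.exists_card_eq_pairwise_iff {α : Type*} [LinearOrder α] (r : α → α → Prop)
    (k : ℕ) : (∃ T : Finset α, T.card = k ∧ (T : Set α).Pairwise r) ↔
      ∃ ψ : Fin k ↪ α, Pairwise fun s t => r (ψ s) (ψ t) := by
  constructor
  · rintro ⟨T, hT, hr⟩
    exact ⟨(T.orderEmbOfFin hT).toEmbedding, fun s t hst => hr (T.orderEmbOfFin_mem hT s)
      (T.orderEmbOfFin_mem hT t) ((T.orderEmbOfFin hT).injective.ne hst)⟩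
  · rintro ⟨ψ, hr⟩
    refine ⟨Finset.univ.map ψ, by simp, ?_⟩
    rw [Finset.coe_map, Finset.coe_univ, Set.image_univ]
    exact hr.range_pairwise

section Nonneg

variable {κ ι ο R : Type*} [Fintype ι] {L : Matrix κ ι R} {C : Matrix ι ο R}

theorem mul_apply_nonneg [Semiring R] [PartialOrder R] [IsOrderedRing R]
    (hL : ∀ s i, 0 ≤ L s i) (hC : ∀ i j, 0 ≤ C i j) (s : κ) (j : ο) : 0 ≤ (L * C) s j :=
  dotProduct_nonneg_of_nonneg (hL s) fun i => hC i j

theorem smul_row_le_mul_row [Semiring R] [PartialOrder R] [IsOrderedRing R]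
    (hL : ∀ s i, 0 ≤ L s i) (hC : ∀ i j, 0 ≤ C i j) (s : κ) (i : ι) :
    L s i • C i ≤ (L * C) s := fun j =>
  Finset.single_le_sum (f := fun i => L s i * C i j) (fun i _ => mul_nonneg (hL s i) (hC i j))
    (Finset.mem_univ i)

theorem dotProduct_eq_zero_of_dotProduct_mul_eq_zero [Fintype ο] [CommRing R] [LinearOrder R]
    [IsStrictOrderedRing R] (hL : ∀ s i, 0 ≤ L s i) (hC : ∀ i j, 0 ≤ C i j) {s t : κ}
    {i i' : ι} (hsi : L s i ≠ 0) (hti : L t i' ≠ 0)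
    (h : (L * C) s ⬝ᵥ (L * C) t = 0) : C i ⬝ᵥ C i' = 0 := by
  have hle : (L s i • C i) ⬝ᵥ (L t i' • C i') ≤ (L * C) s ⬝ᵥ (L * C) t :=
    calc (L s i • C i) ⬝ᵥ (L t i' • C i')
        ≤ (L * C) s ⬝ᵥ (L t i' • C i') := dotProduct_le_dotProduct_of_nonneg_right
          (smul_row_le_mul_row hL hC s i) (smul_nonneg (hL t i') (hC i'))
      _ ≤ (L * C) s ⬝ᵥ (L * C) t := dotProduct_le_dotProduct_of_nonneg_left
          (smul_row_le_mul_row hL hC t i') (mul_apply_nonneg hL hC s)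
  rw [h, smul_dotProduct, dotProduct_smul, smul_eq_mul, smul_eq_mul, ← mul_assoc] at hle
  have hpos : 0 < L s i * L t i' := mul_pos ((hL s i).lt_of_ne' hsi) ((hL t i').lt_of_ne' hti)
  exact le_antisymm (nonpos_of_mul_nonpos_right hle hpos)
    (dotProduct_nonneg_of_nonneg (hC i) (hC i'))

end Nonneg

namespace RowStochastic

variable {a b : ℕ} {M : Matrix (Fin a) (Fin b) ℝ}

theorem row_ne_zero (hM : RowStochastic M) (i : Fin a) : M i ≠ 0 := fun h => by
  simpa [h] using hM.2 i

theorem exists_ne_zero (hM : RowStochastic M) (i : Fin a) : ∃ j, M i j ≠ 0 :=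
  Function.ne_iff.mp (hM.row_ne_zero i)

theorem one_submatrix (f : Fin a → Fin b) :
    RowStochastic ((1 : Matrix (Fin b) (Fin b) ℝ).submatrix f id) :=
  ⟨fun i j => by simp only [submatrix_apply, id, one_apply]; split <;> norm_num,
    fun i => by simp [one_apply]⟩

theorem injective_of_pairwise_dotProduct_eq_zero (hM : RowStochastic M) {ι : Type*}
    {ψ : ι → Fin a} (h : Pairwise fun s t => M (ψ s) ⬝ᵥ M (ψ t) = 0) :
    Function.Injective ψ := by
  intro s t hst
  by_contra hne
  have hself : M (ψ s) ⬝ᵥ M (ψ t) = 0 := h hne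
  rw [hst, dotProduct_self_eq_zero] at hself
  exact hM.row_ne_zero _ hself

end RowStochastic

theorem pairwise_dotProduct_eq_zero_of_mul_eq_one {k m : ℕ} {P : Matrix (Fin k) (Fin m) ℝ}
    {R : Matrix (Fin m) (Fin k) ℝ} (hP : ∀ s j, 0 ≤ P s j) (hR : RowStochastic R)
    (h : P * R = 1) : Pairwise fun s t => P s ⬝ᵥ P t = 0 := by
  have hvanish : ∀ s u j, s ≠ u → P s j ≠ 0 → R j u = 0 := by
    intro s u j hsu hsj
    have hsu : (P * R) s u = 0 := by rw [h, one_apply_ne hsu]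
    rw [mul_apply', dotProduct_eq_zero_iff_of_nonneg (hP s) fun j => hR.1 j u] at hsu
    exact (mul_eq_zero.mp (hsu j)).resolve_left hsj
  intro s t hst
  rw [dotProduct_eq_zero_iff_of_nonneg (hP s) (hP t)]
  intro j
  by_contra hj
  obtain ⟨hsj, htj⟩ := mul_ne_zero_iff.mp hj
  refine hR.row_ne_zero j (funext fun u => ?_)
  rcases eq_or_ne u s with rfl | hus
  · exact hvanish t u j hst.symm htj
  · exact hvanish s u j hus.symm hsj

theorem UW.exists_embedding_pairwise_dotProduct_eq_zero {n m k : ℕ}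
    {C : Matrix (Fin n) (Fin m) ℝ} (hC : RowStochastic C)
    (h : UW (1 : Matrix (Fin k) (Fin k) ℝ) C) :
    ∃ ψ : Fin k ↪ Fin n, Pairwise fun s t => C (ψ s) ⬝ᵥ C (ψ t) = 0 := by
  obtain ⟨L, R, hL, hR, hLCR⟩ := h
  have hLC := pairwise_dotProduct_eq_zero_of_mul_eq_one (mul_apply_nonneg hL.1 hC.1) hR hLCR.symm
  choose ψ hψ using hL.exists_ne_zero
  have horth : Pairwise fun s t => C (ψ s) ⬝ᵥ C (ψ t) = 0 := fun s t hst =>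
    dotProduct_eq_zero_of_dotProduct_mul_eq_zero hL.1 hC.1 (hψ s) (hψ t) (hLC hst)
  exact ⟨⟨ψ, hC.injective_of_pairwise_dotProduct_eq_zero horth⟩, horth⟩

theorem uw_one_of_pairwise_dotProduct_eq_zero {n m k : ℕ} [NeZero k]
    {C : Matrix (Fin n) (Fin m) ℝ} (hC : RowStochastic C) {ψ : Fin k → Fin n}
    (horth : Pairwise fun s t => C (ψ s) ⬝ᵥ C (ψ t) = 0) :
    UW (1 : Matrix (Fin k) (Fin k) ℝ) C := by
  have hcol : ∀ j s t, C (ψ s) j ≠ 0 → C (ψ t) j ≠ 0 → s = t := by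
    intro j s t hs ht
    by_contra hst
    exact mul_ne_zero hs ht
      ((dotProduct_eq_zero_iff_of_nonneg (hC.1 _) (hC.1 _)).mp (horth hst) j)
  classical
  let f : Fin m → Fin k := fun j => if h : ∃ s, C (ψ s) j ≠ 0 then h.choose else 0
  have hf : ∀ j s, C (ψ s) j ≠ 0 → f j = s := fun j s hs => by
    have hex : ∃ s, C (ψ s) j ≠ 0 := ⟨s, hs⟩
    simp only [f, dif_pos hex]
    exact hcol j _ s hex.choose_spec hs
  have hterm : ∀ s t j, C (ψ s) j * (1 : Matrix (Fin k) (Fin k) ℝ) (f j) t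
      = C (ψ s) j * (1 : Matrix (Fin k) (Fin k) ℝ) s t := by
    intro s t j
    by_cases h : C (ψ s) j = 0
    · simp [h]
    · rw [hf j s h]
  refine ⟨(1 : Matrix (Fin n) (Fin n) ℝ).submatrix ψ id,
    (1 : Matrix (Fin k) (Fin k) ℝ).submatrix f id, .one_submatrix ψ, .one_submatrix f, ?_⟩
  have hsel : (1 : Matrix (Fin n) (Fin n) ℝ).submatrix ψ id * C = C.submatrix ψ id := by
    simpa using one_submatrix_mul ψ (Equiv.refl _) C
  rw [hsel]
  ext s t
  calc (1 : Matrix (Fin k) (Fin k) ℝ) s t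
        = (∑ j, C (ψ s) j) * (1 : Matrix (Fin k) (Fin k) ℝ) s t := by rw [hC.2, one_mul]
    _ = ∑ j, C (ψ s) j * (1 : Matrix (Fin k) (Fin k) ℝ) (f j) t := by
        simp only [Finset.sum_mul, hterm]

/-- ι(C) = k iff the maximal number of pairwise orthogonal rows of C is k. -/
theorem iota_eq_iff_orthogonal_rows {n m : ℕ} (C : Matrix (Fin n) (Fin m) ℝ)
    (hC : RowStochastic C) (k : ℕ) :
    iota C = k ↔
      IsGreatest {s : ℕ | ∃ T : Finset (Fin n), T.card = s ∧
        (T : Set (Fin n)).Pairwise fun i i' => (C i) ⬝ᵥ (C i') = 0} k := by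
  set S := {s : ℕ | ∃ T : Finset (Fin n), T.card = s ∧
    (T : Set (Fin n)).Pairwise fun i i' => (C i) ⬝ᵥ (C i') = 0}
  have hbdd : BddAbove S := ⟨n, by rintro _ ⟨T, rfl, -⟩; simpa using T.card_le_univ⟩
  have hmax : IsGreatest S (sSup S) :=
    ⟨Nat.sSup_mem ⟨0, ∅, by simp⟩ hbdd, fun _ => (le_csSup hbdd ·)⟩
  have hUW : ∀ l, UW (1 : Matrix (Fin l) (Fin l) ℝ) C → l ≤ sSup S := fun l hl => by
    obtain ⟨ψ, hψ⟩ := hl.exists_embedding_pairwise_dotProduct_eq_zero hC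
    exact hmax.2 ((Finset.exists_card_eq_pairwise_iff _ l).2 ⟨ψ, hψ⟩)
  have hiota : iota C = sSup S := by
    refine le_antisymm (csSup_le' hUW) ?_
    rcases eq_or_ne (sSup S) 0 with h0 | h0
    · exact h0.le.trans (Nat.zero_le _)
    · have : NeZero (sSup S) := ⟨h0⟩
      obtain ⟨ψ, hψ⟩ := (Finset.exists_card_eq_pairwise_iff _ _).1 hmax.1
      exact le_csSup ⟨_, hUW⟩ (uw_one_of_pairwise_dotProduct_eq_zero hC hψ)
  rw [hiota]
  exact ⟨fun h => h ▸ hmax, hmax.unique⟩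
end

section
/- Let C be a row-stochastic matrix whose rows are pairwise distinct, and suppose some column of C has at least two zero entries and at least one nonzero entry. Then rank_psd(C) ≥ 3; equivalently, C has no qubit implementation. -/
open Matrix BigOperators
open scoped ComplexOrder

/-!
Suppose `C_{ij} = tr (A_i B_j)` with `2 × 2` positive semidefinite `A_i`, `B_j`, and let column
`j` vanish in rows `i₁ ≠ i₂` and not everywhere. For positive semidefinite matrices a vanishing
trace of the product forces the product itself to vanish, so `A_{i₁}` and `A_{i₂}` both kill the
range of `B_j ≠ 0`. In dimension two the Hermitian matrices with a common kernel vector form a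
line, so `A_{i₂} = c • A_{i₁}`; the two rows are then proportional, and since both sum to one
they coincide. Factorizations of size below two are padded by zeros to size two.
-/

open scoped MatrixOrder in
theorem Matrix.PosSemidef.mul_eq_zero_of_trace_mul_eq_zero_s16 {𝕜 n : Type*} [RCLike 𝕜] [Fintype n]
    {A B : Matrix n n 𝕜} (hA : A.PosSemidef) (hB : B.PosSemidef) (h : (A * B).trace = 0) :
    A * B = 0 := by
  classical
  obtain ⟨X, rfl⟩ := CStarAlgebra.nonneg_iff_eq_star_mul_self.mp hA.nonneg
  obtain ⟨Y, rfl⟩ := CStarAlgebra.nonneg_iff_eq_star_mul_self.mp hB.nonneg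
  simp only [star_eq_conjTranspose] at h ⊢
  have hYX : Y * Xᴴ = 0 := by
    rw [← trace_conjTranspose_mul_self_eq_zero_iff, ← h, conjTranspose_mul,
      conjTranspose_conjTranspose, ← Matrix.mul_assoc, trace_mul_comm]
    simp only [Matrix.mul_assoc]
  calc Xᴴ * X * (Yᴴ * Y) = Xᴴ * (Y * Xᴴ)ᴴ * Y := by
        simp only [conjTranspose_mul, conjTranspose_conjTranspose, Matrix.mul_assoc]
    _ = 0 := by rw [hYX, conjTranspose_zero, Matrix.mul_zero, Matrix.zero_mul]

/-- `![-star (v 1), star (v 0)]` spans the orthogonal complement of `v`, so a Hermitian `D`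
with `D v = 0` is a multiple of the projection onto it; the multiple is read off the trace. -/
theorem Matrix.IsHermitian.dotProduct_star_self_smul_eq_trace_smul {R : Type*} [CommRing R]
    [StarRing R] {D : Matrix (Fin 2) (Fin 2) R} (hD : D.IsHermitian) {v : Fin 2 → R}
    (hv : D *ᵥ v = 0) :
    (star v ⬝ᵥ v) • D =
      D.trace • vecMulVec ![-star (v 1), star (v 0)] (star ![-star (v 1), star (v 0)]) := by
  have e0 := congrFun hv 0
  have e1 := congrFun hv 1
  simp only [mulVec, dotProduct, Fin.sum_univ_two, Pi.zero_apply] at e0 e1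
  have s0 := congrArg star e0
  have s1 := congrArg star e1
  simp only [star_add, star_mul', star_zero, hD.apply] at s0 s1
  ext a b
  fin_cases a <;> fin_cases b <;>
    simp only [dotProduct, Pi.star_apply, Fin.sum_univ_two, smul_apply, smul_eq_mul, trace,
      diag_apply, vecMulVec, of_apply, Fin.zero_eta, Fin.mk_one, cons_val_zero, cons_val_one,
      cons_val_fin_one, star_neg, star_star]
  · linear_combination star (v 0) * e0 - v 1 * s1
  · linear_combination star (v 1) * e0 + v 0 * s1
  · linear_combination star (v 0) * e1 + v 1 * s0
  · linear_combination star (v 1) * e1 - v 0 * s0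

theorem Matrix.IsHermitian.exists_eq_smul_of_mulVec_eq_zero {𝕜 : Type*} [RCLike 𝕜]
    {A A' : Matrix (Fin 2) (Fin 2) 𝕜} (hA : A.IsHermitian) (hA' : A'.IsHermitian) (hA0 : A ≠ 0)
    {v : Fin 2 → 𝕜} (hv : v ≠ 0) (h : A *ᵥ v = 0) (h' : A' *ᵥ v = 0) :
    ∃ c : 𝕜, A' = c • A := by
  have hs : star v ⬝ᵥ v ≠ 0 := mt dotProduct_star_self_eq_zero.mp hv
  have key := hA.dotProduct_star_self_smul_eq_trace_smul h
  have key' := hA'.dotProduct_star_self_smul_eq_trace_smul h'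
  have htr : A.trace ≠ 0 := by
    intro h0
    rw [h0, zero_smul] at key
    exact hA0 ((smul_eq_zero.mp key).resolve_left hs)
  refine ⟨A'.trace / A.trace, (smul_right_inj hs).mp ?_⟩
  rw [key', smul_comm, key, smul_smul, div_mul_cancel₀ _ htr]

def HasPsdFactorization {ι κ : Type*} (C : Matrix ι κ ℝ) (k : ℕ) : Prop :=
  ∃ (A : ι → Matrix (Fin k) (Fin k) ℂ) (B : κ → Matrix (Fin k) (Fin k) ℂ),
    (∀ i, (A i).PosSemidef) ∧ (∀ j, (B j).PosSemidef) ∧ ∀ i j, (C i j : ℂ) = (A i * B j).trace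

theorem hasPsdFactorization_of_nonneg {ι : Type*} {m : ℕ} (C : Matrix ι (Fin m) ℝ)
    (hC : ∀ i j, 0 ≤ C i j) : HasPsdFactorization C m := by
  refine ⟨fun i => diagonal fun l => (C i l : ℂ), fun j => diagonal (Pi.single j 1),
    fun i => .diagonal fun l => Complex.zero_le_real.mpr (hC i l),
    fun j => .diagonal fun l => Pi.single_nonneg.mpr zero_le_one l, fun i j => ?_⟩
  simp [diagonal_mul_diagonal, trace_diagonal, Pi.single_apply]

theorem HasPsdFactorization.mono {ι κ : Type*} {C : Matrix ι κ ℝ} {k l : ℕ}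
    (h : HasPsdFactorization C k) (hkl : k ≤ l) : HasPsdFactorization C l := by
  obtain ⟨A, B, hA, hB, hC⟩ := h
  set P : Matrix (Fin k) (Fin l) ℂ := (1 : Matrix (Fin l) (Fin l) ℂ).submatrix (Fin.castLE hkl) id
  have hP : P * Pᴴ = 1 := by
    rw [conjTranspose_submatrix, conjTranspose_one,
      ← submatrix_mul _ _ _ _ _ Function.bijective_id, Matrix.one_mul]
    exact submatrix_one_embedding (Fin.castLEEmb hkl)
  refine ⟨fun i => Pᴴ * A i * P, fun j => Pᴴ * B j * P,
    fun i => (hA i).conjTranspose_mul_mul_same P, fun j => (hB j).conjTranspose_mul_mul_same P,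
    fun i j => ?_⟩
  calc (C i j : ℂ) = (P * Pᴴ * A i * (P * Pᴴ) * B j).trace := by
        rw [hC, hP, Matrix.one_mul, Matrix.mul_one]
    _ = (P * (Pᴴ * A i * P * (Pᴴ * B j))).trace := by simp only [Matrix.mul_assoc]
    _ = (Pᴴ * A i * P * (Pᴴ * B j * P)).trace := by
        rw [trace_mul_comm]; simp only [Matrix.mul_assoc]

theorem row_eq_of_trace_mul_of_eq_smul {ι κ : Type*} [Fintype κ] {k : ℕ} {C : Matrix ι κ ℝ}
    {A : ι → Matrix (Fin k) (Fin k) ℂ} {B : κ → Matrix (Fin k) (Fin k) ℂ}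
    (hC : ∀ i j, (C i j : ℂ) = (A i * B j).trace) (hsum : ∀ i, ∑ j, C i j = 1) {i₁ i₂ : ι}
    {c : ℂ} (hc : A i₂ = c • A i₁) : C i₁ = C i₂ := by
  have hrow : ∀ j, (C i₂ j : ℂ) = c * C i₁ j := fun j => by
    rw [hC, hC, hc, smul_mul, trace_smul, smul_eq_mul]
  have hc1 : c = 1 :=
    calc c = c * ((∑ j, C i₁ j : ℝ) : ℂ) := by rw [hsum, Complex.ofReal_one, mul_one]
      _ = ∑ j, (C i₂ j : ℂ) := by
        rw [Complex.ofReal_sum, Finset.mul_sum]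
        exact Finset.sum_congr rfl fun j _ => (hrow j).symm
      _ = 1 := by rw [← Complex.ofReal_sum, hsum, Complex.ofReal_one]
  funext j
  exact_mod_cast (by rw [hrow, hc1, one_mul] : (C i₂ j : ℂ) = C i₁ j).symm

theorem not_hasPsdFactorization_two {ι κ : Type*} [Fintype κ] {C : Matrix ι κ ℝ}
    (hsum : ∀ i, ∑ j, C i j = 1) {i₁ i₂ : ι} (hne : C i₁ ≠ C i₂) {j : κ}
    (h₁ : C i₁ j = 0) (h₂ : C i₂ j = 0) (h₃ : ∃ i, C i j ≠ 0) :
    ¬ HasPsdFactorization C 2 := by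
  rintro ⟨A, B, hA, hB, hC⟩
  have hA0 : A i₁ ≠ 0 := by
    intro h0
    have hrow : ∀ l, C i₁ l = 0 := fun l => by
      have := hC i₁ l
      rwa [h0, Matrix.zero_mul, trace_zero, Complex.ofReal_eq_zero] at this
    simpa [hrow] using hsum i₁
  have hB0 : B j ≠ 0 := by
    obtain ⟨i, hi⟩ := h₃
    intro h0
    have := hC i j
    rw [h0, Matrix.mul_zero, trace_zero, Complex.ofReal_eq_zero] at this
    exact hi this
  obtain ⟨u, hu⟩ : ∃ u, B j *ᵥ u ≠ 0 := by
    simpa [ext_iff_mulVec] using hB0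
  have hker : ∀ i, C i j = 0 → A i *ᵥ (B j *ᵥ u) = 0 := fun i hi => by
    rw [mulVec_mulVec, (hA i).mul_eq_zero_of_trace_mul_eq_zero_s16 (hB j)
      (by rw [← hC, hi, Complex.ofReal_zero]), zero_mulVec]
  obtain ⟨c, hc⟩ := (hA i₁).isHermitian.exists_eq_smul_of_mulVec_eq_zero (hA i₂).isHermitian
    hA0 hu (hker i₁ h₁) (hker i₂ h₂)
  exact hne (row_eq_of_trace_mul_of_eq_smul hC hsum hc)

/-- If all rows of a communication matrix C are distinct and some column has at
least two zeros and a nonzero entry, then rank_psd(C) ≥ 3. -/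
theorem psdRank_ge_three {n m : ℕ} (C : Matrix (Fin n) (Fin m) ℝ)
    (hC : RowStochastic C) (hrows : ∀ i i' : Fin n, i ≠ i' → C i ≠ C i')
    (hcol : ∃ j : Fin m, (∃ i i' : Fin n, i ≠ i' ∧ C i j = 0 ∧ C i' j = 0) ∧
      ∃ i'' : Fin n, C i'' j ≠ 0) :
    3 ≤ psdRank C := by
  obtain ⟨j, ⟨i₁, i₂, hne, h₁, h₂⟩, h₃⟩ := hcol
  by_contra! hlt
  have hrank : HasPsdFactorization C (psdRank C) :=
    Nat.sInf_mem (s := {k | HasPsdFactorization C k}) ⟨m, hasPsdFactorization_of_nonneg C hC.1⟩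
  exact not_hasPsdFactorization_two hC.2 (hrows i₁ i₂ hne) h₁ h₂ h₃ (hrank.mono (by omega))
end

section
/- Fix n ≥ 2 and ε ∈ [0, 1−1/n]. Then D_{n,ε} ⊒ D_{n,μ} if and only if μ ∈ [ε, 1 − ε/(n−1)]. -/
open Matrix BigOperators

/-
Necessity: if every entry of `D` is at least `t`, so is every entry of `L * D`, and right
multiplication by a row-stochastic `R` preserves total weight; hence every column-selection sum
`∑ j, C (f j) j` of `C = L * D * R` is at least `t` times the number of columns. The smallest entry
of `D_{n,ε}` is `ε/(n-1)`; selecting the diagonal of `D_{n,μ}`, resp. a fixed-point-free choice of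
rows, gives `ε/(n-1) ≤ 1 - μ`, resp. `ε ≤ μ`.

Sufficiency: with `J` the uniform averaging matrix, `D_{n,ε} = α I + (1 - α) J` for
`α = 1 - εn/(n-1)`. As `J² = J`, such mixtures compose by multiplying the weights of `I`, and they
are row-stochastic iff `α ∈ [-1/(n-1), 1]`. The condition `μ ∈ [ε, 1 - ε/(n-1)]` says exactly
`α_μ ∈ α_ε • [-1/(n-1), 1]`, so `L = r I + (1 - r) J` with `α_μ = r α_ε` and `R = I` do it.
-/

lemma exists_mem_Icc_mul_eq {𝕜 : Type*} [Field 𝕜] [LinearOrder 𝕜] [IsStrictOrderedRing 𝕜]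
    {a b c : 𝕜} (ha : 0 ≤ a) (hc : c ≤ 0) (hb : b ∈ Set.Icc (c * a) a) :
    ∃ r ∈ Set.Icc c 1, b = r * a := by
  obtain ⟨hb0, hb1⟩ := hb
  rcases ha.eq_or_lt with rfl | ha
  · exact ⟨0, ⟨hc, zero_le_one⟩, by linarith⟩
  · refine ⟨b / a, ⟨?_, ?_⟩, (div_mul_cancel₀ b ha.ne').symm⟩
    · rwa [le_div_iff₀ ha]
    · rwa [div_le_one ha]

lemma rowStochastic_one (n : ℕ) : RowStochastic (1 : Matrix (Fin n) (Fin n) ℝ) :=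
  ⟨fun i j => by by_cases h : i = j <;> simp [one_apply, h], fun i => by simp [one_apply]⟩

lemma RowStochastic.le_mul_apply {a c d : ℕ} {L : Matrix (Fin a) (Fin c) ℝ}
    {D : Matrix (Fin c) (Fin d) ℝ} {t : ℝ} (hL : RowStochastic L) (hD : ∀ k l, t ≤ D k l)
    (i : Fin a) (l : Fin d) : t ≤ (L * D) i l :=
  calc t = ∑ k, L i k * t := by rw [← Finset.sum_mul, hL.2, one_mul]
    _ ≤ ∑ k, L i k * D k l :=
      Finset.sum_le_sum fun k _ => mul_le_mul_of_nonneg_left (hD k l) (hL.1 i k)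

lemma RowStochastic.mul_le_sum_mul_apply {a b d : ℕ} {M : Matrix (Fin a) (Fin d) ℝ}
    {R : Matrix (Fin d) (Fin b) ℝ} {t : ℝ} (hR : RowStochastic R) (hM : ∀ i l, t ≤ M i l)
    (f : Fin b → Fin a) : t * d ≤ ∑ j, (M * R) (f j) j :=
  calc t * d = ∑ l, ∑ j, t * R l j := by simp [← Finset.mul_sum, hR.2, mul_comm]
    _ = ∑ j, ∑ l, t * R l j := Finset.sum_comm
    _ ≤ ∑ j, (M * R) (f j) j :=
      Finset.sum_le_sum fun j _ => Finset.sum_le_sum fun l _ =>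
        mul_le_mul_of_nonneg_right (hM (f j) l) (hR.1 l j)

lemma UW.mul_le_sum_apply {a b c d : ℕ} {C : Matrix (Fin a) (Fin b) ℝ}
    {D : Matrix (Fin c) (Fin d) ℝ} {t : ℝ} (h : UW C D) (hD : ∀ k l, t ≤ D k l)
    (f : Fin b → Fin a) : t * d ≤ ∑ j, C (f j) j := by
  obtain ⟨L, R, hL, hR, rfl⟩ := h
  exact hR.mul_le_sum_mul_apply (hL.le_mul_apply hD) f

section Dmat

variable {n : ℕ}

@[simp] lemma Dmat_apply_self (ε : ℝ) (i : Fin n) : Dmat n ε i i = 1 - ε := by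
  simp [Dmat]

@[simp] lemma Dmat_apply_of_ne (ε : ℝ) {i j : Fin n} (h : i ≠ j) :
    Dmat n ε i j = ε / (n - 1) := by
  simp [Dmat, h]

lemma div_le_Dmat_apply (hn : 2 ≤ n) {ε : ℝ} (hε : ε * n ≤ n - 1) (i j : Fin n) :
    ε / (n - 1) ≤ Dmat n ε i j := by
  have hn' : (2 : ℝ) ≤ n := by exact_mod_cast hn
  by_cases h : i = j
  · subst h
    rw [Dmat_apply_self, div_le_iff₀ (by linarith)]
    linarith
  · rw [Dmat_apply_of_ne ε h]

lemma sum_Dmat_apply_self (ε : ℝ) : ∑ j : Fin n, Dmat n ε j j = (1 - ε) * n := by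
  simp
  ring

lemma sum_Dmat_apply_of_ne (ε : ℝ) {f : Fin n → Fin n} (hf : ∀ j, f j ≠ j) :
    ∑ j, Dmat n ε (f j) j = ε / (n - 1) * n := by
  simp [hf, mul_comm]

end Dmat

noncomputable def avgMat (n : ℕ) : Matrix (Fin n) (Fin n) ℝ :=
  of fun _ _ => (n : ℝ)⁻¹

noncomputable def avgMix (n : ℕ) (α : ℝ) : Matrix (Fin n) (Fin n) ℝ :=
  α • 1 + (1 - α) • avgMat n

section avgMix

variable {n : ℕ}

lemma avgMat_mul_self : avgMat n * avgMat n = avgMat n := by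
  ext i j
  rcases Nat.eq_zero_or_pos n with rfl | hn
  · exact i.elim0
  · simp [avgMat, mul_apply]
    field_simp

lemma avgMix_mul_avgMix (α β : ℝ) : avgMix n α * avgMix n β = avgMix n (α * β) := by
  simp only [avgMix, add_mul, mul_add, smul_mul_smul_comm, one_mul, mul_one, avgMat_mul_self]
  module

lemma Dmat_eq_avgMix (hn : 2 ≤ n) (ε : ℝ) : Dmat n ε = avgMix n (1 - ε * n / (n - 1)) := by
  have hn' : (2 : ℝ) ≤ n := by exact_mod_cast hn
  have h1 : (n : ℝ) - 1 ≠ 0 := by linarith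
  have h0 : (n : ℝ) ≠ 0 := by linarith
  ext i j
  by_cases h : i = j
  · subst h
    simp [avgMix, avgMat]
    field_simp
    ring
  · simp [avgMix, avgMat, h]
    field_simp

lemma rowStochastic_avgMix (hn : 2 ≤ n) {α : ℝ} (hα : α ∈ Set.Icc (-1 / ((n : ℝ) - 1)) 1) :
    RowStochastic (avgMix n α) := by
  have hn' : (2 : ℝ) ≤ n := by exact_mod_cast hn
  obtain ⟨h0, h1⟩ := hα
  rw [div_le_iff₀ (by linarith)] at h0
  refine ⟨fun i j => ?_, fun i => ?_⟩
  · by_cases h : i = j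
    · subst h
      have hdiag : α + (1 - α) * (n : ℝ)⁻¹ = (α * (n - 1) + 1) / n := by field_simp; ring
      simpa [avgMix, avgMat, hdiag] using div_nonneg (by linarith) (by linarith)
    · simpa [avgMix, avgMat, h] using mul_nonneg (sub_nonneg.2 h1) (by positivity)
  · simp [avgMix, avgMat, Finset.sum_add_distrib, one_apply]
    field_simp
    ring

end avgMix

section UW

variable {n : ℕ} {ε μ : ℝ}

lemma mem_Icc_of_uw_Dmat (hn : 2 ≤ n) (hε : ε * n ≤ n - 1) (h : UW (Dmat n μ) (Dmat n ε)) :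
    μ ∈ Set.Icc ε (1 - ε / (n - 1)) := by
  have hn1 : (0 : ℝ) < n - 1 := by
    have : (2 : ℝ) ≤ n := by exact_mod_cast hn
    linarith
  have hmin := div_le_Dmat_apply hn hε
  have hdiag := h.mul_le_sum_apply hmin fun j => j
  have hoff := h.mul_le_sum_apply hmin (finRotate n)
  rw [sum_Dmat_apply_self] at hdiag
  rw [sum_Dmat_apply_of_ne μ fun j =>
    Equiv.Perm.mem_support.mp (by simp [support_finRotate_of_le hn])] at hoff
  constructor
  · exact (div_le_div_iff_of_pos_right hn1).mp (le_of_mul_le_mul_right hoff (by positivity))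
  · linarith [le_of_mul_le_mul_right hdiag (by positivity)]

lemma uw_Dmat_of_mem_Icc (hn : 2 ≤ n) (hε : ε * n ≤ n - 1) (hμ : μ ∈ Set.Icc ε (1 - ε / (n - 1))) :
    UW (Dmat n μ) (Dmat n ε) := by
  have hn1 : (0 : ℝ) < n - 1 := by
    have : (2 : ℝ) ≤ n := by exact_mod_cast hn
    linarith
  obtain ⟨hεμ, hμε⟩ := hμ
  have hμn : μ * (n - 1) + ε ≤ n - 1 := by
    have := mul_le_mul_of_nonneg_right hμε hn1.le
    rwa [sub_mul, div_mul_cancel₀ _ hn1.ne', one_mul, le_sub_iff_add_le] at this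
  obtain ⟨r, hr, hrμ⟩ : ∃ r ∈ Set.Icc (-1 / ((n : ℝ) - 1)) 1,
      1 - μ * n / (n - 1) = r * (1 - ε * n / (n - 1)) := by
    refine exists_mem_Icc_mul_eq ?_ (div_nonpos_of_nonpos_of_nonneg (by norm_num) hn1.le) ⟨?_, ?_⟩
    · rwa [sub_nonneg, div_le_one hn1]
    · field_simp
      nlinarith
    · field_simp
      nlinarith
  refine ⟨avgMix n r, 1, rowStochastic_avgMix hn hr, rowStochastic_one n, ?_⟩
  rw [mul_one, Dmat_eq_avgMix hn, Dmat_eq_avgMix hn, avgMix_mul_avgMix, hrμ]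

end UW

theorem Dmat_uw_iff_dist_general (n : ℕ) (hn : 2 ≤ n) (ε μ : ℝ)
    (hε : ε ∈ Set.Icc (0:ℝ) (1 - 1/n)) :
    UW (Dmat n μ) (Dmat n ε) ↔ μ ∈ Set.Icc ε (1 - ε / (n - 1)) := by
  have hεn : ε * n ≤ n - 1 := by
    have := mul_le_mul_of_nonneg_right hε.2 (Nat.cast_nonneg n)
    rwa [sub_mul, one_div, inv_mul_cancel₀ (by positivity), one_mul] at this
  exact ⟨mem_Icc_of_uw_Dmat hn hεn, uw_Dmat_of_mem_Icc hn hεn⟩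

/-- For ε in the distinguishability regime, D_{n,ε} ⊒ D_{n,μ} iff
μ ∈ [ε, 1 − ε/(n−1)]. -/
theorem Dmat_uw_iff_dist (n : ℕ) (hn : 2 ≤ n) (ε μ : ℝ)
    (hε : ε ∈ Set.Icc (0:ℝ) (1 - 1/n)) (hμ : μ ∈ Set.Icc (0:ℝ) 1) :
    UW (Dmat n μ) (Dmat n ε) ↔ μ ∈ Set.Icc ε (1 - ε / (n - 1)) :=
  Dmat_uw_iff_dist_general n hn ε μ hε
end

section
/- Fix n ≥ 2 and ε ∈ [1−1/n, 1]. Then D_{n,ε} ⊒ D_{n,μ} if and only if μ ∈ [1 − ε/(n−1), ε]. -/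
open Matrix BigOperators

lemma RowStochastic.mul {a b c : ℕ} {M : Matrix (Fin a) (Fin b) ℝ} {N : Matrix (Fin b) (Fin c) ℝ}
    (hM : RowStochastic M) (hN : RowStochastic N) : RowStochastic (M * N) := by
  refine ⟨fun i j => ?_, fun i => ?_⟩
  · rw [mul_apply]
    exact Finset.sum_nonneg fun k _ => mul_nonneg (hM.1 i k) (hN.1 k j)
  · simp only [mul_apply]
    rw [Finset.sum_comm]
    simp [← Finset.mul_sum, hN.2, hM.2 i]

lemma RowStochastic.trace_mul_le {a b : ℕ} {S : Matrix (Fin b) (Fin a) ℝ} (hS : RowStochastic S)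
    {A : Matrix (Fin a) (Fin b) ℝ} {m : ℝ} (hA : ∀ i k, A i k ≤ m) :
    trace (A * S) ≤ b * m :=
  calc trace (A * S) = ∑ i, ∑ k, A i k * S k i := rfl
    _ ≤ ∑ i, ∑ k, m * S k i := by gcongr with i _ k _; exacts [hS.1 k i, hA i k]
    _ = b * m := by
      rw [Finset.sum_comm]
      simp [← Finset.mul_sum, hS.2, mul_comm]

lemma UW.trace_mul_le {a b c d : ℕ} {C : Matrix (Fin a) (Fin b) ℝ} {D : Matrix (Fin c) (Fin d) ℝ}
    (h : UW C D) {m : ℝ} (hD : ∀ i k, D i k ≤ m) {Q : Matrix (Fin b) (Fin a) ℝ}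
    (hQ : RowStochastic Q) : trace (C * Q) ≤ d * m := by
  obtain ⟨L, R, hL, hR, rfl⟩ := h
  have hcycle : trace (L * D * R * Q) = trace (D * (R * Q * L)) := by
    rw [Matrix.mul_assoc L D R, Matrix.mul_assoc, trace_mul_comm]
    simp only [Matrix.mul_assoc]
  rw [hcycle]
  exact ((hR.mul hQ).mul hL).trace_mul_le hD

lemma one_sub_smul_mul_one_sub_smul {R A : Type*} [CommRing R] [Ring A] [Algebra R A] {P : A}
    (hP : IsIdempotentElem P) (a b : R) :
    (1 - a • P) * (1 - b • P) = 1 - (a + b - a * b) • P := by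
  simp only [sub_mul, mul_sub, one_mul, mul_one, smul_mul_smul_comm, hP.eq]
  module

noncomputable def centeringMatrix (n : ℕ) : Matrix (Fin n) (Fin n) ℝ :=
  1 - (n : ℝ)⁻¹ • Matrix.of fun _ _ => 1

lemma isIdempotentElem_centeringMatrix (n : ℕ) [NeZero n] :
    IsIdempotentElem (centeringMatrix n) := by
  have hJ : (Matrix.of fun _ _ => (1 : ℝ)) * (Matrix.of fun _ _ => 1 : Matrix (Fin n) (Fin n) ℝ)
      = (n : ℝ) • Matrix.of fun _ _ => 1 := by
    ext i j; simp [mul_apply]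
  have hn : (n : ℝ) ≠ 0 := NeZero.ne _
  unfold IsIdempotentElem centeringMatrix
  simp only [sub_mul, mul_sub, one_mul, mul_one, smul_mul_smul_comm, hJ, smul_smul]
  rw [show (n : ℝ)⁻¹ * (n : ℝ)⁻¹ * n = (n : ℝ)⁻¹ by field_simp]
  abel

section Dmat

variable {n : ℕ}

lemma Dmat_eq_one_sub_smul_centeringMatrix (hn : 2 ≤ n) (x : ℝ) :
    Dmat n x = 1 - (n / (n - 1) * x) • centeringMatrix n := by
  have hn' : (2 : ℝ) ≤ n := by exact_mod_cast hn
  have hn1 : (n : ℝ) - 1 ≠ 0 := by linarith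
  ext i j
  by_cases h : i = j
  · simp only [Dmat, h, of_apply, ↓reduceIte, centeringMatrix, smul_of, Matrix.sub_apply,
      one_apply_eq, Matrix.smul_apply, Pi.smul_apply, smul_eq_mul, mul_one, sub_right_inj]
    field_simp
  · simp only [Dmat, of_apply, h, ↓reduceIte, centeringMatrix, smul_of, Matrix.sub_apply,
      one_apply_ne h, Matrix.smul_apply, Pi.smul_apply, smul_eq_mul, mul_one, zero_sub, mul_neg,
      sub_neg_eq_add, zero_add]
    field_simp

lemma Dmat_mul_Dmat (hn : 2 ≤ n) (x y : ℝ) :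
    Dmat n x * Dmat n y = Dmat n (x + y - n / (n - 1) * x * y) := by
  have : NeZero n := ⟨by omega⟩
  simp only [Dmat_eq_one_sub_smul_centeringMatrix hn,
    one_sub_smul_mul_one_sub_smul (isIdempotentElem_centeringMatrix n)]
  congr 3
  have hn1 : (n : ℝ) - 1 ≠ 0 := by
    have : (2 : ℝ) ≤ n := by exact_mod_cast hn
    linarith
  field_simp

lemma trace_Dmat (x : ℝ) : trace (Dmat n x) = n * (1 - x) := by
  simp only [trace, Dmat, diag_apply, of_apply, ↓reduceIte, Finset.sum_sub_distrib,
    Finset.sum_const, Finset.card_univ, Fintype.card_fin, nsmul_eq_mul, mul_one]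
  ring

lemma rowStochastic_Dmat (hn : 2 ≤ n) {x : ℝ} (hx : x ∈ Set.Icc (0 : ℝ) 1) :
    RowStochastic (Dmat n x) := by
  have hn1 : (0 : ℝ) < n - 1 := by
    have : (2 : ℝ) ≤ n := by exact_mod_cast hn
    linarith
  refine ⟨fun i j => ?_, fun i => ?_⟩
  · by_cases h : i = j
    · simp [Dmat, h, hx.2]
    · simp only [Dmat, of_apply, if_neg h]
      exact div_nonneg hx.1 hn1.le
  · have hsplit (j : Fin n) : Dmat n x i j
        = x / (n - 1) + if i = j then 1 - x - x / (n - 1) else 0 := by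
      simp only [Dmat, of_apply]
      split_ifs <;> ring
    simp only [hsplit, Finset.sum_add_distrib, Finset.sum_ite_eq, Finset.mem_univ, if_true,
      Finset.sum_const, Finset.card_univ, Fintype.card_fin, nsmul_eq_mul]
    field_simp
    ring

lemma one_sub_le_div_of_one_sub_one_div_le (hn : 2 ≤ n) {ε : ℝ} (hε : 1 - 1 / (n : ℝ) ≤ ε) :
    1 - ε ≤ ε / (n - 1) := by
  have hn' : (2 : ℝ) ≤ n := by exact_mod_cast hn
  have hε' : (n : ℝ) - 1 ≤ n * ε := by
    have := mul_le_mul_of_nonneg_left hε (by linarith : (0 : ℝ) ≤ n)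
    rwa [mul_sub, mul_one, mul_one_div_cancel (by linarith)] at this
  rw [le_div_iff₀ (by linarith)]
  linarith

lemma Dmat_apply_le (hn : 2 ≤ n) {ε : ℝ} (hε : 1 - 1 / (n : ℝ) ≤ ε) (i j : Fin n) :
    Dmat n ε i j ≤ ε / (n - 1) := by
  by_cases h : i = j
  · simpa [Dmat, h] using one_sub_le_div_of_one_sub_one_div_le hn hε
  · simp [Dmat, h]

lemma mem_Icc_of_UW_Dmat (hn : 2 ≤ n) {ε μ : ℝ} (hε : 1 - 1 / (n : ℝ) ≤ ε)
    (h : UW (Dmat n μ) (Dmat n ε)) : μ ∈ Set.Icc (1 - ε / (n - 1)) ε := by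
  have hn' : (2 : ℝ) ≤ n := by exact_mod_cast hn
  have hn0 : (0 : ℝ) < n := by linarith
  have hn1 : (0 : ℝ) < n - 1 := by linarith
  have bound (y : ℝ) (hy : y ∈ Set.Icc (0 : ℝ) 1) :
      1 - (μ + y - n / (n - 1) * μ * y) ≤ ε / (n - 1) := by
    have := h.trace_mul_le (Dmat_apply_le hn hε) (rowStochastic_Dmat hn hy)
    rw [Dmat_mul_Dmat hn, trace_Dmat] at this
    exact le_of_mul_le_mul_left this hn0
  have h0 := bound 0 (by simp)
  have h1 := bound 1 (by simp)
  have h1' : 1 - (μ + 1 - n / (n - 1) * μ * 1) = μ / (n - 1) := by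
    field_simp
    ring
  rw [h1', div_le_div_iff_of_pos_right hn1] at h1
  exact ⟨by linarith, h1⟩

lemma UW_Dmat_of_mem_Icc (hn : 2 ≤ n) {ε μ : ℝ} (hε : 1 - 1 / (n : ℝ) ≤ ε)
    (hμ : μ ∈ Set.Icc (1 - ε / (n - 1)) ε) : UW (Dmat n μ) (Dmat n ε) := by
  have hn' : (2 : ℝ) ≤ n := by exact_mod_cast hn
  have hn1 : (n : ℝ) - 1 ≠ 0 := by linarith
  obtain ⟨hμ1, hμ2⟩ := hμ
  have hdiag := one_sub_le_div_of_one_sub_one_div_le hn hε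
  -- `D_ε D_δ = D_μ` amounts to `δ κ = ε - μ`.
  obtain ⟨κ, hκ⟩ : ∃ κ : ℝ, κ = ε + ε / (n - 1) - 1 := ⟨_, rfl⟩
  have hκ0 : 0 ≤ κ := by linarith
  have hεμ : ε - μ ≤ κ := by linarith
  have hδ : (ε - μ) / κ * κ = ε - μ := by
    rcases hκ0.eq_or_lt with h | h
    · rw [← h] at hεμ ⊢; linarith
    · exact div_mul_cancel₀ _ h.ne'
  have hratio : n / (n - 1) * ε = ε + ε / (n - 1) := by
    field_simp
    ring
  refine ⟨1, Dmat n ((ε - μ) / κ), rowStochastic_one n, rowStochastic_Dmat hn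
    ⟨div_nonneg (by linarith) hκ0, div_le_one_of_le₀ hεμ hκ0⟩, ?_⟩
  rw [Matrix.one_mul, Dmat_mul_Dmat hn]
  congr 1
  linear_combination hδ - (ε - μ) / κ * hκ + (ε - μ) / κ * hratio

end Dmat

theorem Dmat_uw_iff_antidist_general (n : ℕ) (hn : 2 ≤ n) (ε μ : ℝ)
    (hε : ε ∈ Set.Icc (1 - 1/(n:ℝ)) 1) :
    UW (Dmat n μ) (Dmat n ε) ↔ μ ∈ Set.Icc (1 - ε / (n - 1)) ε :=
  ⟨mem_Icc_of_UW_Dmat hn hε.1, UW_Dmat_of_mem_Icc hn hε.1⟩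

/-- For ε in the antidistinguishability regime, D_{n,ε} ⊒ D_{n,μ} iff
μ ∈ [1 − ε/(n−1), ε]. -/
theorem Dmat_uw_iff_antidist (n : ℕ) (hn : 2 ≤ n) (ε μ : ℝ)
    (hε : ε ∈ Set.Icc (1 - 1/(n:ℝ)) 1) (hμ : μ ∈ Set.Icc (0:ℝ) 1) :
    UW (Dmat n μ) (Dmat n ε) ↔ μ ∈ Set.Icc (1 - ε / (n - 1)) ε :=
  Dmat_uw_iff_antidist_general n hn ε μ hε
end

section
/- Let K₋ = (1/2)[[1,1,0,0],[1,0,1,0],[0,1,0,1]] and C = [[1,0,0],[0,1/2,1/2],[1/2,0,1/2]]. Then K₋ is not ultraweakly majorized by C: there do not exist row-stochastic matrices L (3×3) and R (3×4) with L C R = K₋. -/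
open Matrix BigOperators

set_option maxHeartbeats 2000000 in
/-- K₋ = (1/2)[[1,1,0,0],[1,0,1,0],[0,1,0,1]] is not ultraweakly majorized by
C = [[1,0,0],[0,1/2,1/2],[1/2,0,1/2]]. -/
theorem Kminus_not_uw_C :
    ¬ UW ((1/2 : ℝ) • !![1, 1, 0, 0; 1, 0, 1, 0; 0, 1, 0, 1])
        (!![(1:ℝ), 0, 0; 0, 1/2, 1/2; 1/2, 0, 1/2]) := by
  rintro ⟨L, R, ⟨hL0, hL1⟩, ⟨hR0, hR1⟩, heq⟩
  have h := fun i k => congrFun (congrFun heq i) k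
  have h00 := h 0 0; have h01 := h 0 1
  have h10 := h 1 0; have h11 := h 1 1; have h13 := h 1 3
  have h20 := h 2 0; have h21 := h 2 1; have h22 := h 2 2; have h23 := h 2 3
  simp [Matrix.mul_apply, Fin.sum_univ_succ] at h00 h01 h10 h11 h13 h20 h21 h22 h23
  have hs0 := hL1 0; have hs1 := hL1 1; have hs2 := hL1 2; have hr2 := hR1 2
  simp [Fin.sum_univ_four] at hr2
  simp [Fin.sum_univ_succ] at hs0 hs1 hs2
  clear h heq hL1 hR1
  rcases eq_or_lt_of_le (by linarith [hL0 1 1, hL0 1 2] :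
      (0:ℝ) ≤ L 1 1 + L 1 2) with hw | hw
  · -- Case B: L 1 1 = L 1 2 = 0
    have hb1 : L 1 1 = 0 := by linarith [hL0 1 1, hL0 1 2]
    have hc1 : L 1 2 = 0 := by linarith [hL0 1 1, hL0 1 2]
    have ha1 : L 1 0 = 1 := by linarith
    rw [ha1, hb1, hc1] at h10 h11
    have hp0 : R 0 0 = 2⁻¹ := by linarith
    have hp1 : R 0 1 = 0 := by linarith
    rw [hp0] at h20
    have ha2 : L 2 0 = 0 := by
      linarith [hL0 2 0, hL0 2 1, hL0 2 2, mul_nonneg (hL0 2 1) (hR0 1 0),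
        mul_nonneg (hL0 2 1) (hR0 2 0), mul_nonneg (hL0 2 2) (hR0 2 0)]
    have hc2 : L 2 2 = 0 := by
      linarith [hL0 2 0, hL0 2 1, hL0 2 2, mul_nonneg (hL0 2 1) (hR0 1 0),
        mul_nonneg (hL0 2 1) (hR0 2 0), mul_nonneg (hL0 2 2) (hR0 2 0)]
    have hb2 : L 2 1 = 1 := by linarith
    rw [ha2, hb2, hc2] at h20
    have hq0 : R 1 0 = 0 := by linarith [hR0 2 0, hR0 1 0]
    have hs0' : R 2 0 = 0 := by linarith [hR0 2 0, hR0 1 0]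
    rw [hp0, hq0, hs0'] at h00
    have hb0 : L 0 1 = 0 := by linarith [hL0 0 1, hL0 0 2]
    have hc0 : L 0 2 = 0 := by linarith [hL0 0 1, hL0 0 2]
    have ha0 : L 0 0 = 1 := by linarith
    rw [ha0, hb0, hc0, hp1] at h01
    linarith
  · -- Case A: 0 < L 1 1 + L 1 2
    have hw1nn : (0:ℝ) ≤ L 1 0 + L 1 2 * 2⁻¹ := by linarith [hL0 1 0, hL0 1 2]
    have hs3 : R 2 3 = 0 := by
      rcases (hR0 2 3).eq_or_lt with h' | h'
      · exact h'.symm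
      · exfalso
        linarith [mul_nonneg hw1nn (hR0 0 3), mul_nonneg (hL0 1 1) (hR0 1 3),
          mul_pos hw h']
    have hs1' : R 2 1 = 0 := by
      rcases (hR0 2 1).eq_or_lt with h' | h'
      · exact h'.symm
      · exfalso
        linarith [mul_nonneg hw1nn (hR0 0 1), mul_nonneg (hL0 1 1) (hR0 1 1),
          mul_pos hw h']
    rcases eq_or_lt_of_le (by linarith [hL0 2 1, hL0 2 2] :
        (0:ℝ) ≤ L 2 1 + L 2 2) with hw2 | hw2
    · -- L 2 1 = L 2 2 = 0, hence row of K₂ is row 0 of R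
      have hb2 : L 2 1 = 0 := by linarith [hL0 2 1, hL0 2 2]
      have hc2 : L 2 2 = 0 := by linarith [hL0 2 1, hL0 2 2]
      have ha2 : L 2 0 = 1 := by linarith
      rw [ha2, hb2, hc2] at h20 h21 h23
      have hp0 : R 0 0 = 0 := by linarith
      have hp1 : R 0 1 = 2⁻¹ := by linarith
      have hp3 : R 0 3 = 2⁻¹ := by linarith
      rw [hp3, hs3] at h13
      have ha1 : L 1 0 = 0 := by
        linarith [hL0 1 0, hL0 1 2, mul_nonneg (hL0 1 1) (hR0 1 3)]
      have hc1 : L 1 2 = 0 := by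
        linarith [hL0 1 0, hL0 1 2, mul_nonneg (hL0 1 1) (hR0 1 3)]
      have hb1 : L 1 1 = 1 := by linarith
      rw [ha1, hb1, hc1, hp1] at h11
      have hq1 : R 1 1 = 0 := by linarith [hR0 1 1, hR0 2 1]
      rw [hp1, hq1, hs1'] at h01
      have hb0 : L 0 1 = 0 := by linarith [hL0 0 1, hL0 0 2]
      have hc0 : L 0 2 = 0 := by linarith [hL0 0 1, hL0 0 2]
      have ha0 : L 0 0 = 1 := by linarith
      rw [ha0, hb0, hc0, hp0] at h00
      linarith
    · -- 0 < L 2 1 + L 2 2 : row 2 of R vanishes entirely, contradiction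
      have hw2nn : (0:ℝ) ≤ L 2 0 + L 2 2 * 2⁻¹ := by linarith [hL0 2 0, hL0 2 2]
      have hs0' : R 2 0 = 0 := by
        rcases (hR0 2 0).eq_or_lt with h' | h'
        · exact h'.symm
        · exfalso
          linarith [mul_nonneg hw2nn (hR0 0 0), mul_nonneg (hL0 2 1) (hR0 1 0),
            mul_pos hw2 h']
      have hs2' : R 2 2 = 0 := by
        rcases (hR0 2 2).eq_or_lt with h' | h'
        · exact h'.symm
        · exfalso
          linarith [mul_nonneg hw2nn (hR0 0 2), mul_nonneg (hL0 2 1) (hR0 1 2),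
            mul_pos hw2 h']
      rw [hs0', hs1', hs2', hs3] at hr2
      linarith
end
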